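/- arXiv:1301.1568 — 3 statements merged into one kernel-verified Lean document; each statement's English description precedes it below -/
import Mathlib

section
/- Let γ, δ ∈ P(X) be connected and suppose γ has a cycle of length k. Then Γ(γ) is rp-homomorphic to Γ(δ) if and only if δ has a cycle of length m for some m dividing k. -/
namespace ConjPaper

open Classical

/-- Partial transformations of `X`. -/
abbrev PT (X : Type*) := X → Option X

variable {X : Type*}

/-- Left-to-right composition: `x(αφ) = (xα)φ`. -/
def pcomp (α φ : PT X) : PT X := fun x => (α x).bind φ

/-- The zero of `P(X)`: the empty transformation. -/
def pzero : PT X := fun _ => none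

/-- The identity of `P(X)`. -/
def pid : PT X := fun x => some x

/-- The domain of a partial transformation. -/
def pdom (α : PT X) : Set X := {x | α x ≠ none}

/-- The image of a partial transformation. -/
def pim (α : PT X) : Set X := {y | ∃ x, α x = some y}

/-- The span: `dom(α) ∪ im(α)`. -/
def pspan (α : PT X) : Set X := pdom α ∪ pim α

/-- Iterates `γ^k` of a partial transformation (`γ^0 = id`). -/
def pit (α : PT X) : ℕ → PT X
  | 0 => pid
  | n + 1 => pcomp (pit α n) α

/-- `φ` is a restrictive partial homomorphism (rp-homomorphism) from `Γ(α)` to `Γ(β)`: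
(a) every arc `x → y` of `Γ(α)` has `x, y ∈ dom(φ)` and `xφ → yφ` an arc of `Γ(β)`;
(b) if `x` is terminal in `Γ(α)` and `x ∈ dom(φ)`, then `xφ` is terminal in `Γ(β)`. -/
def IsRpHom (α β φ : PT X) : Prop :=
  (∀ x y, α x = some y →
    ∃ x' y', φ x = some x' ∧ φ y = some y' ∧ β x' = some y') ∧
  (∀ x x', α x = none → φ x = some x' → β x' = none)

/-- `γ` is connected: `γ ≠ 0` and any two points of `span(γ)` reach a common point
under nonnegative iterates of `γ`. -/
def Connected (γ : PT X) : Prop :=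
  γ ≠ pzero ∧ ∀ x ∈ pspan γ, ∀ y ∈ pspan γ,
    ∃ k m z, pit γ k x = some z ∧ pit γ m y = some z

/-- `γ` has a cycle of length `k ≥ 1`: some `x` with `xγ^k = x` (defined) and
`xγ^i ≠ x` for `1 ≤ i < k`. -/
def HasCycle (γ : PT X) (k : ℕ) : Prop :=
  1 ≤ k ∧ ∃ x, pit γ k x = some x ∧ ∀ i, 1 ≤ i → i < k → pit γ i x ≠ some x

lemma pit_zero (α : PT X) (x : X) : pit α 0 x = some x := rfl
lemma pit_succ (α : PT X) (n : ℕ) (x : X) :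
    pit α (n + 1) x = (pit α n x).bind α := rfl
lemma pit_one (α : PT X) (x : X) : pit α 1 x = α x := rfl
lemma pit_add (α : PT X) (a b : ℕ) (x : X) :
    pit α (a + b) x = (pit α a x).bind (pit α b) := by
  induction b with
  | zero => cases h : pit α a x <;> simp [pit, pid, h]
  | succ n ih =>
      show pit α ((a + n) + 1) x = _
      rw [pit_succ, ih]
      cases h : pit α a x with
      | none => simp
      | some z => simp [pit_succ]
lemma pit_one_add (α : PT X) (n : ℕ) (x : X) :
    pit α (1 + n) x = (α x).bind (pit α n) := by
  rw [pit_add, pit_one]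
lemma cyc_mod {γ : PT X} {x₀ : X} {k : ℕ} (hk1 : 1 ≤ k)
    (hc : pit γ k x₀ = some x₀) : ∀ n, pit γ n x₀ = pit γ (n % k) x₀ := by
  intro n
  induction n using Nat.strong_induction_on with
  | _ n ih =>
    by_cases h : n < k
    · rw [Nat.mod_eq_of_lt h]
    · push_neg at h
      have h1 : n = k + (n - k) := by omega
      rw [h1, pit_add, hc, Nat.add_mod_left]
      simpa using ih (n - k) (by omega)
lemma cyc_some {γ : PT X} {x₀ : X} {k : ℕ} (hk1 : 1 ≤ k)
    (hc : pit γ k x₀ = some x₀) : ∀ n, ∃ w, pit γ n x₀ = some w := by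
  intro n
  rw [cyc_mod hk1 hc n]
  have h1 : pit γ (n % k + (k - n % k)) x₀ = some x₀ := by
    rw [show n % k + (k - n % k) = k by
      have := Nat.mod_lt n (show 0 < k by omega); omega]
    exact hc
  rw [pit_add] at h1
  cases h : pit γ (n % k) x₀ with
  | none => rw [h] at h1; simp at h1
  | some w => exact ⟨w, rfl⟩
lemma cyc_inj {γ : PT X} {x₀ : X} {k : ℕ} (hk1 : 1 ≤ k)
    (hc : pit γ k x₀ = some x₀)
    (hmin : ∀ i, 1 ≤ i → i < k → pit γ i x₀ ≠ some x₀) :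
    ∀ i j, i < k → j < k → pit γ i x₀ = pit γ j x₀ → i = j := by
  have key : ∀ i j, i ≤ j → j < k → pit γ i x₀ = pit γ j x₀ → i = j := by
    intro i j hij hj h
    by_contra hne
    have hlt : i < j := lt_of_le_of_ne hij hne
    have h1 : pit γ (j + (k - j)) x₀ = some x₀ := by
      rw [show j + (k - j) = k by omega]; exact hc
    rw [pit_add] at h1
    have h2 : pit γ (i + (k - j)) x₀ = some x₀ := by rw [pit_add, h]; exact h1
    exact hmin (i + (k - j)) (by omega) (by omega) h2
  intro i j hi hj h
  rcases le_total i j with hle | hle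
  · exact key i j hle hj h
  · exact (key j i hle hi h.symm).symm
lemma cyc_modEq {γ : PT X} {x₀ : X} {k : ℕ} (hk1 : 1 ≤ k)
    (hc : pit γ k x₀ = some x₀)
    (hmin : ∀ i, 1 ≤ i → i < k → pit γ i x₀ ≠ some x₀)
    {s t : ℕ} (h : pit γ s x₀ = pit γ t x₀) : s ≡ t [MOD k] :=
  cyc_inj hk1 hc hmin (s % k) (t % k)
    (Nat.mod_lt _ (by omega)) (Nat.mod_lt _ (by omega))
    (by rw [← cyc_mod hk1 hc, ← cyc_mod hk1 hc]; exact h)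

/-- `x` reaches the forward orbit of `x₀`. -/
def Reach (γ : PT X) (x₀ x : X) : Prop :=
  ∃ a b z, pit γ a x = some z ∧ pit γ b x₀ = some z

noncomputable def phA (γ : PT X) (x₀ x : X) : ℕ :=
  if h : Reach γ x₀ x then h.choose else 0

noncomputable def phB (γ : PT X) (x₀ x : X) : ℕ :=
  if h : Reach γ x₀ x then h.choose_spec.choose else 0

lemma ph_spec {γ : PT X} {x₀ x : X} (h : Reach γ x₀ x) :
    ∃ z, pit γ (phA γ x₀ x) x = some z ∧ pit γ (phB γ x₀ x) x₀ = some z := by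
  rw [phA, phB, dif_pos h, dif_pos h]
  exact h.choose_spec.choose_spec

/-- The rp-homomorphism in the backward direction. -/
noncomputable def rpPhi (γ δ : PT X) (x₀ y₀ : X) (m : ℕ) : PT X :=
  fun x => if Reach γ x₀ x then pit δ (phB γ x₀ x + phA γ x₀ x * (m - 1)) y₀ else none

lemma backward {γ δ : PT X} (hγ : Connected γ) {k : ℕ} (hk : HasCycle γ k)
    {m : ℕ} (hmk : m ∣ k) (hm : HasCycle δ m) : ∃ φ : PT X, IsRpHom γ δ φ := by
  obtain ⟨hk1, x₀, hck, hmink⟩ := hk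
  obtain ⟨hm1, y₀, hcm, -⟩ := hm
  have hx₀dom : γ x₀ ≠ none := by
    obtain ⟨w, hw⟩ := cyc_some hk1 hck 1
    rw [pit_one] at hw
    simp [hw]
  have hx₀span : x₀ ∈ pspan γ := Or.inl hx₀dom
  have hreach : ∀ x ∈ pspan γ, Reach γ x₀ x := by
    intro x hx
    obtain ⟨a, b, z, h1, h2⟩ := hγ.2 x hx x₀ hx₀span
    exact ⟨a, b, z, h1, h2⟩
  -- well-definedness modulo m
  have W : ∀ (x : X) (a b : ℕ) (z : X) (a' b' : ℕ) (z' : X),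
      pit γ a x = some z → pit γ b x₀ = some z →
      pit γ a' x = some z' → pit γ b' x₀ = some z' →
      b + a' ≡ b' + a [MOD m] := by
    intro x a b z a' b' z' h1 h2 h3 h4
    have e1 : pit γ (b + a') x₀ = pit γ (a + a') x := by
      rw [pit_add, pit_add, h1, h2]
    have e2 : pit γ (b' + a) x₀ = pit γ (a' + a) x := by
      rw [pit_add, pit_add, h3, h4]
    have e3 : pit γ (b + a') x₀ = pit γ (b' + a) x₀ := by
      rw [e1, e2, Nat.add_comm a a']
    exact (cyc_modEq hk1 hck hmink e3).of_dvd hmk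
  -- periodicity of the δ-cycle
  have hperiod : ∀ s t : ℕ, s ≡ t [MOD m] → pit δ s y₀ = pit δ t y₀ := by
    intro s t hst
    rw [cyc_mod hm1 hcm s, cyc_mod hm1 hcm t, show s % m = t % m from hst]
  refine ⟨rpPhi γ δ x₀ y₀ m, ?_, ?_⟩
  · -- arcs
    intro x y hxy
    have hRx : Reach γ x₀ x := hreach x (Or.inl (by simp [pdom, hxy]))
    have hRy : Reach γ x₀ y := hreach y (Or.inr ⟨x, hxy⟩)
    obtain ⟨z, ha, hb⟩ := ph_spec hRx
    obtain ⟨z', ha', hb'⟩ := ph_spec hRy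
    set a := phA γ x₀ x with hadef
    set b := phB γ x₀ x with hbdef
    set a' := phA γ x₀ y with ha'def
    set b' := phB γ x₀ y with hb'def
    -- (a, b+1) is a witness pair for y
    obtain ⟨z₂, hz₂⟩ := cyc_some hk1 hck (b + 1)
    have harc2 : γ z = some z₂ := by
      have h := hz₂
      rw [pit_succ, hb] at h
      simpa using h
    have hay : pit γ a y = some z₂ := by
      have h1 : pit γ (a + 1) x = some z₂ := by
        rw [pit_succ, ha]
        simpa using harc2
      rw [Nat.add_comm, pit_one_add, hxy] at h1
      simpa using h1
    have hW : b' + a ≡ (b + 1) + a' [MOD m] :=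
      W y a' b' z' a (b + 1) z₂ ha' hb' hay hz₂
    -- exponent congruence
    have hEq : b' + a' * (m - 1) ≡ (b + a * (m - 1)) + 1 [MOD m] := by
      rw [Nat.modEq_iff_dvd] at hW ⊢
      obtain ⟨c, hc⟩ := hW
      refine ⟨c + a - a', ?_⟩
      have hcast : ((m - 1 : ℕ) : ℤ) = (m : ℤ) - 1 := by
        rw [Nat.cast_sub hm1]; norm_num
      push_cast [hcast] at hc ⊢
      linear_combination hc
    obtain ⟨x', hx'⟩ := cyc_some hm1 hcm (b + a * (m - 1))
    obtain ⟨y', hy'⟩ := cyc_some hm1 hcm (b' + a' * (m - 1))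
    refine ⟨x', y', ?_, ?_, ?_⟩
    · rw [rpPhi, if_pos hRx, ← hadef, ← hbdef]; exact hx'
    · rw [rpPhi, if_pos hRy, ← ha'def, ← hb'def]; exact hy'
    · have h1 : pit δ ((b + a * (m - 1)) + 1) y₀ = δ x' := by
        rw [pit_succ, hx']
        rfl
      rw [← h1, ← hperiod _ _ hEq]
      exact hy'
  · -- terminal condition
    intro x x' hxnone hφx
    exfalso
    by_cases hR : Reach γ x₀ x
    · obtain ⟨z, ha, hb⟩ := ph_spec hR
      cases hA : phA γ x₀ x with
      | zero =>
          rw [hA, pit_zero] at ha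
          injection ha with ha
          subst ha
          obtain ⟨w, hw⟩ := cyc_some hk1 hck (phB γ x₀ x + 1)
          rw [pit_succ, hb] at hw
          simp [hxnone] at hw
      | succ n =>
          rw [hA, show n + 1 = 1 + n by omega, pit_one_add, hxnone] at ha
          simp at ha
    · rw [rpPhi, if_neg hR] at hφx
      simp at hφx


lemma forward {γ δ φ : PT X} (hφ : IsRpHom γ δ φ) {k : ℕ} (hk : HasCycle γ k) :
    ∃ m, m ∣ k ∧ HasCycle δ m := by
  obtain ⟨hk1, x₀, hc, hmin⟩ := hk
  obtain ⟨x₁, hx₁⟩ : ∃ x₁, γ x₀ = some x₁ := by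
    obtain ⟨w, hw⟩ := cyc_some hk1 hc 1
    exact ⟨w, by rwa [pit_one] at hw⟩
  obtain ⟨x₀', y₁', hφx₀, -, -⟩ := hφ.1 x₀ x₁ hx₁
  have chain : ∀ n, ∃ w w', pit γ n x₀ = some w ∧ φ w = some w' ∧
      pit δ n x₀' = some w' := by
    intro n
    induction n with
    | zero => exact ⟨x₀, x₀', rfl, hφx₀, rfl⟩
    | succ n ih =>
        obtain ⟨w, w', hw, hφw, hd⟩ := ih
        obtain ⟨w₂, hw₂⟩ := cyc_some hk1 hc (n + 1)
        have harc : γ w = some w₂ := by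
          have h := hw₂
          rw [pit_succ, hw] at h
          simpa using h
        obtain ⟨u, v, hu, hv, huv⟩ := hφ.1 w w₂ harc
        rw [hφw] at hu
        injection hu with hu
        subst hu
        refine ⟨w₂, v, hw₂, hv, ?_⟩
        rw [pit_succ, hd]
        simpa using huv
  obtain ⟨w, w', hw, hφw, hdk⟩ := chain k
  rw [hc] at hw
  injection hw with hw
  subst hw
  rw [hφx₀] at hφw
  injection hφw with hφw
  subst hφw
  have hP : ∃ i, 1 ≤ i ∧ pit δ i x₀' = some x₀' := ⟨k, hk1, hdk⟩
  set m := Nat.find hP with hmdef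
  have hm := Nat.find_spec hP
  have hmmin : ∀ i, i < m → ¬(1 ≤ i ∧ pit δ i x₀' = some x₀') :=
    fun i h => Nat.find_min hP h
  have hmul : ∀ j, pit δ (j * m) x₀' = some x₀' := by
    intro j
    induction j with
    | zero => rw [Nat.zero_mul]; rfl
    | succ j ih =>
        rw [Nat.succ_mul, pit_add, ih]
        simpa using hm.2
  have hr : pit δ (k % m) x₀' = some x₀' := by
    have h1 : pit δ (m * (k / m) + k % m) x₀' = some x₀' := by
      rw [Nat.div_add_mod]; exact hdk
    rw [pit_add, Nat.mul_comm m (k / m), hmul] at h1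
    simpa using h1
  have hrm : k % m = 0 := by
    by_contra h
    have hm1 := hm.1
    exact hmmin (k % m) (Nat.mod_lt _ (by omega)) ⟨by omega, hr⟩
  exact ⟨m, Nat.dvd_of_mod_eq_zero hrm, hm.1, x₀', hm.2,
    fun i h1 h2 hi => hmmin i h2 ⟨h1, hi⟩⟩


/-- Proposition 4.13 / Lemma 4.19 for connected `γ`.
Let `γ, δ ∈ P(X)` be connected with `γ` having a cycle of length `k`. Then
`Γ(γ)` is rp-homomorphic to `Γ(δ)` iff `δ` has a cycle of length `m` for some `m ∣ k`. -/
theorem rpHomomorphic_iff_cycle_dvd (γ δ : PT X)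
    (hγ : Connected γ) (hδ : Connected δ) (k : ℕ) (hk : HasCycle γ k) :
    (∃ φ : PT X, IsRpHom γ δ φ) ↔ ∃ m, m ∣ k ∧ HasCycle δ m := by
  constructor
  · rintro ⟨φ, hφ⟩
    exact forward hφ hk
  · rintro ⟨m, hmk, hm⟩
    exact backward hγ hk hmk hm

end ConjPaper
end

section
/- Let X be a finite nonempty set and let α, β : X → X. Then α ~c β in T(X) if and only if cs(α) = cs(β). -/
namespace ConjPaper

open Classical

variable {X : Type*}

/-- Conjugacy `α ~c β` in the full transformation monoid `T(X)`:
there are full transformations `φ, ψ` with `φ ∘ α = β ∘ φ` and `ψ ∘ β = α ∘ ψ`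
(the paper's `αφ = φβ` and `βψ = ψα` in left-to-right notation). -/
def ConjT (α β : X → X) : Prop :=
  ∃ φ ψ : X → X, φ ∘ α = β ∘ φ ∧ ψ ∘ β = α ∘ ψ

/-- The component equivalence: `x ≈_α y` iff `α^k(x) = α^m(y)` for some `k, m ≥ 0`. -/
def relT (α : X → X) (x y : X) : Prop := ∃ k m : ℕ, α^[k] x = α^[m] y

/-- `Y` is an `≈_α`-class (equivalently, the underlying set of a connected
component of `α`). -/
def IsClass (α : X → X) (Y : Set X) : Prop := ∃ x0, Y = {y | relT α y x0}

/-- `α` has a periodic point. -/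
def HasPer (α : X → X) : Prop := ∃ x, ∃ n, 1 ≤ n ∧ α^[n] x = x

/-- `α` has a double ray: an injective family `(xᵢ)_{i ∈ ℤ}` with `α(xᵢ) = xᵢ₊₁`. -/
def HasDR (α : X → X) : Prop :=
  ∃ f : ℤ → X, Function.Injective f ∧ ∀ i, α (f i) = f (i + 1)

/-- The set `M(α)` of cycle lengths of `α`. -/
def MT (α : X → X) : Set ℕ :=
  {n | 1 ≤ n ∧ ∃ x, α^[n] x = x ∧ ∀ i, 1 ≤ i → i < n → α^[i] x ≠ x}

/-- The cycle set `cs(α)`: the divisibility-minimal elements of `M(α)`. -/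
def csT (α : X → X) : Set ℕ := {n ∈ MT α | ∀ m ∈ MT α, m ∣ n → m = n}

/-! ### Auxiliary lemmas -/

open Function

lemma mem_MT_iff {α : X → X} {n : ℕ} :
    n ∈ MT α ↔ 1 ≤ n ∧ ∃ x, Function.minimalPeriod α x = n := by
  constructor
  · rintro ⟨h1, x, hx, hmin⟩
    refine ⟨h1, x, ?_⟩
    have hp : IsPeriodicPt α n x := hx
    have hd := hp.minimalPeriod_dvd
    have hpos : 0 < minimalPeriod α x := hp.minimalPeriod_pos h1
    rcases lt_or_eq_of_le (Nat.le_of_dvd h1 hd) with hlt | heq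
    · exact absurd (isPeriodicPt_minimalPeriod α x) (hmin _ hpos hlt)
    · exact heq
  · rintro ⟨h1, x, rfl⟩
    refine ⟨h1, x, isPeriodicPt_minimalPeriod α x, fun i hi1 hilt hix => ?_⟩
    have : IsPeriodicPt α i x := hix
    exact absurd (this.minimalPeriod_le hi1) (not_le_of_gt hilt)

lemma exists_dvd_of_semiconj {α β φ : X → X} (h : φ ∘ α = β ∘ φ)
    {n : ℕ} (hn : n ∈ MT α) : ∃ m ∈ MT β, m ∣ n := by
  obtain ⟨h1, x, hx⟩ := mem_MT_iff.mp hn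
  have hs : Function.Semiconj φ α β := fun y => congrFun h y
  have hper : IsPeriodicPt β n (φ x) := by
    have h2 : β^[n] (φ x) = φ (α^[n] x) := ((hs.iterate_right n) x).symm
    have hxp : α^[n] x = x := by
      rw [← hx]; exact isPeriodicPt_minimalPeriod α x
    show β^[n] (φ x) = φ x
    rw [h2, hxp]
  refine ⟨minimalPeriod β (φ x), mem_MT_iff.mpr ⟨hper.minimalPeriod_pos h1, φ x, rfl⟩,
    hper.minimalPeriod_dvd⟩

lemma cs_subset {α β φ ψ : X → X} (hφ : φ ∘ α = β ∘ φ) (hψ : ψ ∘ β = α ∘ ψ) :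
    csT α ⊆ csT β := by
  rintro n ⟨hnM, hnmin⟩
  have key : ∀ m ∈ MT β, m ∣ n → m = n := by
    intro m hm hmn
    obtain ⟨n', hn'M, hn'm⟩ := exists_dvd_of_semiconj hψ hm
    have : n' = n := hnmin n' hn'M (hn'm.trans hmn)
    subst this
    exact Nat.dvd_antisymm hmn hn'm
  obtain ⟨m, hmM, hmn⟩ := exists_dvd_of_semiconj hφ hnM
  have := key m hmM hmn
  subst this
  exact ⟨hmM, key⟩

lemma exists_cs_dvd {α : X → X} {n : ℕ} (hn : n ∈ MT α) : ∃ d ∈ csT α, d ∣ n := by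
  induction n using Nat.strong_induction_on with
  | _ n ih =>
    by_cases hc : ∀ m ∈ MT α, m ∣ n → m = n
    · exact ⟨n, ⟨hn, hc⟩, dvd_rfl⟩
    · push_neg at hc
      obtain ⟨m, hmM, hmn, hne⟩ := hc
      have hlt : m < n := lt_of_le_of_ne (Nat.le_of_dvd hn.1 hmn) hne
      obtain ⟨d, hd, hdm⟩ := ih m hlt hmM
      exact ⟨d, hd, hdm.trans hmn⟩

lemma iterate_stab [Finite X] (α : X → X) : ∃ N, 1 ≤ N ∧ α^[N + N] = α^[N] := by
  have h2 : ∃ i j : ℕ, i < j ∧ α^[i] = α^[j] := by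
    obtain ⟨a, b, hne, hab⟩ := Finite.exists_ne_map_eq_of_infinite (fun k : ℕ => α^[k])
    rcases lt_or_gt_of_ne hne with h | h
    · exact ⟨a, b, h, hab⟩
    · exact ⟨b, a, h, hab.symm⟩
  obtain ⟨i, j, hij, heq⟩ := h2
  set p := j - i with hp
  have hp1 : 1 ≤ p := by omega
  have hjp : i + p = j := by omega
  have step : ∀ k, i ≤ k → α^[k + p] = α^[k] := by
    intro k hk
    obtain ⟨s, rfl⟩ := Nat.exists_eq_add_of_le hk
    calc α^[i + s + p] = α^[s + (i + p)] := by ring_nf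
    _ = α^[s] ∘ α^[i + p] := Function.iterate_add α s (i+p)
    _ = α^[s] ∘ α^[i] := by rw [hjp, ← heq]
    _ = α^[s + i] := (Function.iterate_add α s i).symm
    _ = α^[i + s] := by rw [Nat.add_comm]
  have mult : ∀ t k, i ≤ k → α^[k + t * p] = α^[k] := by
    intro t
    induction t with
    | zero => simp
    | succ t iht =>
      intro k hk
      have h3 : k + (t + 1) * p = (k + t * p) + p := by ring
      rw [h3, step _ (by omega), iht k hk]
  refine ⟨j * p, by nlinarith, ?_⟩
  exact mult j (j * p) (by nlinarith)

open scoped Classical in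
noncomputable def pick (X : Type*) [Nonempty X] : Set X → X :=
  fun S => if h : S.Nonempty then h.some else Classical.arbitrary X

lemma pick_mem [Nonempty X] {S : Set X} (h : S.Nonempty) : pick X S ∈ S := by
  rw [pick, dif_pos h]; exact h.some_mem

lemma semiconj_of_dvd [Finite X] [Nonempty X] {α β : X → X}
    (H : ∀ n ∈ MT α, ∃ d ∈ MT β, d ∣ n) : ∃ φ : X → X, φ ∘ α = β ∘ φ := by
  classical
  obtain ⟨N, hN1, hNN⟩ := iterate_stab α
  obtain ⟨N', hN'⟩ : ∃ N', N = N' + 1 := ⟨N - 1, by omega⟩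
  -- periodic points
  have hPerN : ∀ x, α^[N] (α^[N] x) = α^[N] x := fun x => by
    have := congrFun hNN x
    rwa [Function.iterate_add_apply] at this
  have hPerα : ∀ z, α^[N] z = z → α^[N] (α z) = α z := by
    intro z hz
    rw [← Function.iterate_succ_apply, Function.iterate_succ_apply', hz]
  have hPerIter : ∀ k z, α^[N] z = z → α^[N] (α^[k] z) = α^[k] z := by
    intro k
    induction k with
    | zero => intro z hz; simpa using hz
    | succ k ih =>
      intro z hz
      rw [Function.iterate_succ_apply']
      exact hPerα _ (ih z hz)
  have hiterPer : ∀ t z, α^[N] z = z → α^[t * N] z = z := by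
    intro t
    induction t with
    | zero => intro z _; simp
    | succ t ih =>
      intro z hz
      have h' : (t + 1) * N = t * N + N := by ring
      rw [h', Function.iterate_add_apply, hz, ih z hz]
  -- orbits and representatives
  set orb : X → Set X := fun z => Set.range (fun k => α^[k] z) with horb
  have horbne : ∀ z, (orb z).Nonempty := fun z => ⟨z, 0, rfl⟩
  set rep : X → X := fun z => pick X (orb z) with hrepdef
  have hrepmem : ∀ z, ∃ k, α^[k] z = rep z := fun z => pick_mem (horbne z)
  have horbα : ∀ z, α^[N] z = z → orb (α z) = orb z := by
    intro z hz
    apply Set.eq_of_subset_of_subset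
    · rintro w ⟨k, rfl⟩
      exact ⟨k + 1, by simp [Function.iterate_succ_apply]⟩
    · rintro w ⟨k, rfl⟩
      refine ⟨k + N', ?_⟩
      show α^[k + N'] (α z) = α^[k] z
      have hz' : α^[N'] (α z) = z := by
        rw [← Function.iterate_succ_apply, Nat.succ_eq_add_one, ← hN', hz]
      rw [Function.iterate_add_apply, hz']
  have hrepα : ∀ z, α^[N] z = z → rep (α z) = rep z := by
    intro z hz
    show pick X (orb (α z)) = pick X (orb z)
    rw [horbα z hz]
  have hPerrep : ∀ z, α^[N] z = z → α^[N] (rep z) = rep z := by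
    intro z hz
    obtain ⟨k, hk⟩ := hrepmem z
    rw [← hk]
    exact hPerIter k z hz
  have hphase : ∀ z, α^[N] z = z → ∃ i, α^[i] (rep z) = z := by
    intro z hz
    obtain ⟨k, hk⟩ := hrepmem z
    refine ⟨(k + 1) * N - k, ?_⟩
    rw [← hk, ← Function.iterate_add_apply]
    have hle : k + 1 ≤ (k + 1) * N := Nat.le_mul_of_pos_right _ hN1
    have h'' : (k + 1) * N - k + k = (k + 1) * N := by omega
    rw [h'']
    exact hiterPer (k + 1) z hz
  -- choice functions
  choose! m hmM hmdvd using H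
  have K : ∀ k ∈ MT β, ∃ y, Function.minimalPeriod β y = k := fun k hk => (mem_MT_iff.mp hk).2
  choose! yy hyy using K
  choose! ph hph using hphase
  refine ⟨fun x => β^[ph (α^[N] x)] (yy (m (Function.minimalPeriod α (rep (α^[N] x))))),
    funext fun x => ?_⟩
  have hg : ∀ z, α^[N] z = z →
      β^[ph (α z)] (yy (m (Function.minimalPeriod α (rep (α z))))) =
      β (β^[ph z] (yy (m (Function.minimalPeriod α (rep z))))) := by
    intro z hz
    have hz' : α^[N] (α z) = α z := hPerα z hz
    have hrep : rep (α z) = rep z := hrepα z hz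
    rw [hrep]
    have hPerc : IsPeriodicPt α N (rep z) := hPerrep z hz
    have hnpos : 0 < Function.minimalPeriod α (rep z) := hPerc.minimalPeriod_pos hN1
    have hnM : Function.minimalPeriod α (rep z) ∈ MT α :=
      mem_MT_iff.mpr ⟨hnpos, rep z, rfl⟩
    have hdM : m (Function.minimalPeriod α (rep z)) ∈ MT β := hmM _ hnM
    have hdn : m (Function.minimalPeriod α (rep z)) ∣ Function.minimalPeriod α (rep z) :=
      hmdvd _ hnM
    have hy : Function.minimalPeriod β (yy (m (Function.minimalPeriod α (rep z)))) =
        m (Function.minimalPeriod α (rep z)) := hyy _ hdM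
    have h1 : α^[ph (α z)] (rep z) = α z := by rw [← hrep]; exact hph (α z) hz'
    have h2 : α^[ph z + 1] (rep z) = α z := by
      rw [Function.iterate_succ_apply', hph z hz]
    have hmod : ph (α z) % Function.minimalPeriod α (rep z)
        = (ph z + 1) % Function.minimalPeriod α (rep z) := by
      have e1 : α^[ph (α z) % Function.minimalPeriod α (rep z)] (rep z) = α z := by
        rw [Function.iterate_mod_minimalPeriod_eq]; exact h1
      have e2 : α^[(ph z + 1) % Function.minimalPeriod α (rep z)] (rep z) = α z := by
        rw [Function.iterate_mod_minimalPeriod_eq]; exact h2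
      exact Function.iterate_injOn_Iio_minimalPeriod
        (Set.mem_Iio.mpr (Nat.mod_lt _ hnpos)) (Set.mem_Iio.mpr (Nat.mod_lt _ hnpos))
        (e1.trans e2.symm)
    have hmodd : ph (α z) % m (Function.minimalPeriod α (rep z))
        = (ph z + 1) % m (Function.minimalPeriod α (rep z)) :=
      Nat.ModEq.of_dvd hdn hmod
    calc β^[ph (α z)] (yy (m (Function.minimalPeriod α (rep z))))
        = β^[ph (α z) % Function.minimalPeriod β (yy (m (Function.minimalPeriod α (rep z))))]
            (yy (m (Function.minimalPeriod α (rep z)))) :=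
          (Function.iterate_mod_minimalPeriod_eq).symm
      _ = β^[(ph z + 1) % Function.minimalPeriod β (yy (m (Function.minimalPeriod α (rep z))))]
            (yy (m (Function.minimalPeriod α (rep z)))) := by rw [hy, hmodd]
      _ = β^[ph z + 1] (yy (m (Function.minimalPeriod α (rep z)))) :=
          Function.iterate_mod_minimalPeriod_eq
      _ = β (β^[ph z] (yy (m (Function.minimalPeriod α (rep z))))) :=
          Function.iterate_succ_apply' β (ph z) _
  show β^[ph (α^[N] (α x))] (yy (m (Function.minimalPeriod α (rep (α^[N] (α x)))))) =
      β (β^[ph (α^[N] x)] (yy (m (Function.minimalPeriod α (rep (α^[N] x))))))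
  have hNx : α^[N] (α x) = α (α^[N] x) := by
    rw [← Function.iterate_succ_apply, Function.iterate_succ_apply']
  rw [hNx]
  exact hg _ (hPerN x)

/-- Corollary 6.3. For a finite nonempty set `X` and `α, β ∈ T(X)`:
`α ~c β` iff `cs(α) = cs(β)`. -/
theorem conjT_iff_cs (X : Type*) [Finite X] [Nonempty X] (α β : X → X) :
    ConjT α β ↔ csT α = csT β := by
  constructor
  · rintro ⟨φ, ψ, hφ, hψ⟩
    exact Set.Subset.antisymm (cs_subset hφ hψ) (cs_subset hψ hφ)
  · intro h
    have H1 : ∀ n ∈ MT α, ∃ d ∈ MT β, d ∣ n := by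
      intro n hn
      obtain ⟨d, hd, hdn⟩ := exists_cs_dvd hn
      rw [h] at hd
      exact ⟨d, hd.1, hdn⟩
    have H2 : ∀ n ∈ MT β, ∃ d ∈ MT α, d ∣ n := by
      intro n hn
      obtain ⟨d, hd, hdn⟩ := exists_cs_dvd hn
      rw [← h] at hd
      exact ⟨d, hd.1, hdn⟩
    obtain ⟨φ, hφ⟩ := semiconj_of_dvd H1
    obtain ⟨ψ, hψ⟩ := semiconj_of_dvd H2
    exact ⟨φ, ψ, hφ, hψ⟩

end ConjPaper
end

section
/- Let X be a nonempty set and let α, β : X → X be injective full transformations. Then α ~c β in Γ(X) if and only if |A_α| + |B_α| = |A_β| + |B_β| (cardinal addition), |B_α| = |B_β|, and |C^n_α| = |C^n_β| for every integer n ≥ 1. -/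
/-!
For injective `α`, the `≈_α`-class of `x` is a right ray, a double ray or a cycle of length `n`
according as it leaves `range α`, or stays in `range α` with `x` aperiodic, or `x` has minimal
period `n`. Right rays and cycles are forward orbits `{α^[k] x}`; on a double ray `α` acts as a
permutation whose powers parametrize it by `ℤ`.

An injective `φ` with `φ ∘ α = β ∘ φ` sends the class of `x` into the class of `φ x`, separates
classes, preserves minimal periods and keeps classes inside the range (points of a double ray have
preimages of every depth). Hence it induces injections `B_α → B_β`, `C^n_α → C^n_β` and
`A_α ∪ B_α → A_β ∪ B_β`. Conversely, these cardinal inequalities give an injection of classes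
sending right rays to right or double rays, double rays to double rays and `n`-cycles to
`n`-cycles; matching the parametrizations embeds each class equivariantly into its image, and the
pieces glue. Conjugacy in `Γ(X)` is such an embedding in both directions, so antisymmetry of `≤`
on cardinals gives the equalities.
-/

namespace ConjPaper

open Classical

variable {X : Type*}

/-- Conjugacy `α ~c β` in the monoid `Γ(X)` of injective full transformations:
there are injective `φ, ψ : X → X` with `φ ∘ α = β ∘ φ` and `ψ ∘ β = α ∘ ψ`. -/
def ConjInj (α β : X → X) : Prop :=
  ∃ φ ψ : X → X, Function.Injective φ ∧ Function.Injective ψ ∧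
    φ ∘ α = β ∘ φ ∧ ψ ∘ β = α ∘ ψ

/-- `A_α`: the set of right-ray classes of `α`, i.e. classes containing a point
outside `im(α)`. -/
def Aset (α : X → X) : Set (Set X) :=
  {Y | IsClass α Y ∧ ∃ x ∈ Y, x ∉ Set.range α}

/-- `B_α`: the set of double-ray classes of `α`, i.e. classes containing no periodic
point and no point outside `im(α)`. -/
def Bset (α : X → X) : Set (Set X) :=
  {Y | IsClass α Y ∧ (∀ x ∈ Y, ∀ n, 1 ≤ n → α^[n] x ≠ x) ∧ ∀ x ∈ Y, x ∈ Set.range α}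

/-- `C_α^n`: the set of cycle classes of `α` of length `n`, i.e. classes of size `n`
each of whose points `x` satisfies `α^n(x) = x` and `α^i(x) ≠ x` for `1 ≤ i < n`. -/
def Cset (α : X → X) (n : ℕ) : Set (Set X) :=
  {Y | IsClass α Y ∧ Y.ncard = n ∧
    ∀ x ∈ Y, α^[n] x = x ∧ ∀ i, 1 ≤ i → i < n → α^[i] x ≠ x}

open Function Set
open scoped Cardinal

universe u

section Component

variable {α : X → X} {x y z : X}

theorem relT.refl (α : X → X) (x : X) : relT α x x := ⟨0, 0, rfl⟩

theorem relT.symm (h : relT α x y) : relT α y x :=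
  let ⟨k, m, e⟩ := h; ⟨m, k, e.symm⟩

theorem relT.trans (hxy : relT α x y) (hyz : relT α y z) : relT α x z := by
  obtain ⟨k, m, e⟩ := hxy
  obtain ⟨k', m', e'⟩ := hyz
  refine ⟨k' + k, m + m', ?_⟩
  rw [iterate_add_apply, e, ← iterate_add_apply, add_comm, iterate_add_apply, e',
    ← iterate_add_apply]

theorem relT_iterate (α : X → X) (x : X) (k : ℕ) : relT α (α^[k] x) x := ⟨0, k, rfl⟩

def component (α : X → X) (x : X) : Set X := {y | relT α y x}

theorem mem_component_self (α : X → X) (x : X) : x ∈ component α x := relT.refl α x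

theorem component_eq_of_mem (h : y ∈ component α x) : component α y = component α x :=
  Set.ext fun _ => ⟨fun hz => relT.trans hz h, fun hz => relT.trans hz h.symm⟩

theorem isClass_component (α : X → X) (x : X) : IsClass α (component α x) := ⟨x, rfl⟩

theorem IsClass.eq_component {Y : Set X} (hY : IsClass α Y) (hx : x ∈ Y) :
    Y = component α x := by
  obtain ⟨x₀, rfl⟩ := hY
  exact (component_eq_of_mem hx).symm

theorem iterate_mem_component (h : y ∈ component α x) (k : ℕ) :
    α^[k] y ∈ component α x :=
  (relT_iterate α y k).trans h

theorem range_iterate_subset_component (α : X → X) (x : X) :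
    range (α^[·] x) ⊆ component α x := by
  rintro _ ⟨k, rfl⟩
  exact iterate_mem_component (mem_component_self α x) k

theorem IsClass.mapsTo {Y : Set X} (hY : IsClass α Y) : MapsTo α Y Y := fun y hy => by
  rw [hY.eq_component hy]
  exact iterate_mem_component (mem_component_self α y) 1

theorem exists_iterate_eq_of_component_subset_range (h : component α x ⊆ range α) (k : ℕ) :
    ∃ w, α^[k] w = x := by
  induction k with
  | zero => exact ⟨x, rfl⟩
  | succ k ih =>
    obtain ⟨w, hw⟩ := ih
    obtain ⟨v, rfl⟩ := h (show w ∈ component α x from hw ▸ (relT_iterate α w k).symm)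
    exact ⟨v, by rwa [iterate_succ_apply]⟩

end Component

section Injective

variable {α : X → X} {x y s : X}

theorem eq_iterate_sub_of_iterate_eq (hα : Injective α) {k m : ℕ} (hkm : k ≤ m)
    (h : α^[k] y = α^[m] x) : y = α^[m - k] x := by
  apply hα.iterate k
  rwa [← iterate_add_apply, Nat.add_sub_cancel' hkm]

theorem iterate_eq_iterate_iff_modEq (hα : Injective α) {a b : ℕ} :
    α^[a] x = α^[b] x ↔ a ≡ b [MOD minimalPeriod α x] := by
  wlog hab : a ≤ b generalizing a b
  · rw [eq_comm, Nat.ModEq.comm]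
    exact this (le_of_not_ge hab)
  rw [Nat.modEq_iff_dvd' hab, ← isPeriodicPt_iff_minimalPeriod_dvd, IsPeriodicPt, IsFixedPt,
    eq_comm]
  exact ⟨fun h => (eq_iterate_sub_of_iterate_eq hα hab h.symm).symm,
    fun h => by rw [← Nat.add_sub_cancel' hab, iterate_add_apply, h]⟩

theorem mem_periodicPts_of_relT (hα : Injective α) (h : relT α x y) (hx : x ∈ periodicPts α) :
    y ∈ periodicPts α := by
  obtain ⟨k, m, e⟩ := h
  obtain ⟨n, hn, hxn⟩ := hx
  refine mk_mem_periodicPts hn (hα.iterate m ?_)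
  rw [← iterate_add_apply, add_comm, iterate_add_apply, ← e, (hxn.apply_iterate k).eq]

theorem mem_periodicPts_iff_of_relT (hα : Injective α) (h : relT α x y) :
    x ∈ periodicPts α ↔ y ∈ periodicPts α :=
  ⟨mem_periodicPts_of_relT hα h, mem_periodicPts_of_relT hα h.symm⟩

theorem component_subset_range_of_mem_periodicPts (hα : Injective α)
    (hx : x ∈ periodicPts α) : component α x ⊆ range α := fun _ hy =>
  periodicPts_subset_range ((mem_periodicPts_iff_of_relT hα hy).mpr hx)

theorem notMem_periodicPts_of_notMem_range (hs : s ∉ range α) : s ∉ periodicPts α :=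
  fun h => hs (periodicPts_subset_range h)

theorem component_eq_range_iterate_of_notMem_range (hα : Injective α) (hs : s ∉ range α) :
    component α s = range (α^[·] s) := by
  refine subset_antisymm ?_ (range_iterate_subset_component α s)
  rintro y ⟨k, m, e⟩
  rcases le_or_gt k m with hkm | hmk
  · exact ⟨m - k, (eq_iterate_sub_of_iterate_eq hα hkm e).symm⟩
  · refine absurd ⟨α^[k - m - 1] y, ?_⟩ hs
    rw [eq_iterate_sub_of_iterate_eq hα hmk.le e.symm, ← iterate_succ_apply' α]
    congr 1
    omega

theorem component_eq_range_iterate_of_mem_periodicPts (hα : Injective α)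
    (hx : x ∈ periodicPts α) : component α x = range (α^[·] x) := by
  refine subset_antisymm ?_ (range_iterate_subset_component α x)
  rintro y ⟨k, m, e⟩
  set n := minimalPeriod α x
  have hn : 0 < n := minimalPeriod_pos_of_mem_periodicPts hx
  have hk : k ≤ m + k * n := le_add_left (Nat.le_mul_of_pos_right k hn)
  refine ⟨m + k * n - k, (eq_iterate_sub_of_iterate_eq hα hk ?_).symm⟩
  rw [e, iterate_add_apply, ((isPeriodicPt_minimalPeriod α x).const_mul k).eq]

end Injective

section Kinds

variable {α : X → X} {x : X} {Y : Set X} {n : ℕ}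

theorem IsClass.nonempty (hY : IsClass α Y) : Y.Nonempty :=
  let ⟨x, hx⟩ := hY; ⟨x, hx ▸ relT.refl α x⟩

theorem disjoint_Aset_Bset : Disjoint (Aset α) (Bset α) :=
  Set.disjoint_left.mpr fun _ ⟨_, y, hy, hyr⟩ hB => hyr (hB.2.2 y hy)

theorem notMem_Cset_of_mem_Aset (hA : Y ∈ Aset α) : Y ∉ Cset α (n + 1) := by
  rintro ⟨-, -, hC⟩
  obtain ⟨-, y, hy, hyr⟩ := hA
  exact hyr (periodicPts_subset_range (mk_mem_periodicPts n.succ_pos (hC y hy).1))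

theorem notMem_Cset_of_mem_Bset (hB : Y ∈ Bset α) : Y ∉ Cset α (n + 1) := by
  rintro ⟨-, -, hC⟩
  obtain ⟨y, hy⟩ := hB.1.nonempty
  exact hB.2.1 y hy (n + 1) n.succ_pos (hC y hy).1

theorem notMem_periodicPts_iff : x ∉ periodicPts α ↔ ∀ n, 1 ≤ n → α^[n] x ≠ x := by
  simp only [periodicPts, mem_ofPred_eq, not_exists, not_and, IsPeriodicPt, IsFixedPt, gt_iff_lt,
    Nat.lt_iff_add_one_le, zero_add]

theorem minimalPeriod_eq_iff (hn : 0 < n) :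
    minimalPeriod α x = n ↔ α^[n] x = x ∧ ∀ i, 1 ≤ i → i < n → α^[i] x ≠ x := by
  refine ⟨?_, fun ⟨hper, hmin⟩ => ?_⟩
  · rintro rfl
    exact ⟨iterate_minimalPeriod, fun i hi hin =>
      not_isPeriodicPt_of_pos_of_lt_minimalPeriod (Nat.one_le_iff_ne_zero.mp hi) hin⟩
  · have hpos := IsPeriodicPt.minimalPeriod_pos hn hper
    refine le_antisymm (IsPeriodicPt.minimalPeriod_le hn hper) (not_lt.mp fun hlt => ?_)
    exact hmin _ hpos hlt iterate_minimalPeriod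

theorem range_iterate_eq_image_Iio (hx : x ∈ periodicPts α) :
    range (α^[·] x) = (α^[·] x) '' Iio (minimalPeriod α x) := by
  refine subset_antisymm ?_ (image_subset_range _ _)
  rintro _ ⟨k, rfl⟩
  exact ⟨k % minimalPeriod α x, Nat.mod_lt _ (minimalPeriod_pos_of_mem_periodicPts hx),
    iterate_mod_minimalPeriod_eq⟩

theorem component_mem_Aset_iff : component α x ∈ Aset α ↔ ¬ component α x ⊆ range α := by
  simp [Aset, isClass_component, subset_def]

variable (hα : Injective α)
include hα

theorem component_mem_Bset_iff :
    component α x ∈ Bset α ↔ x ∉ periodicPts α ∧ component α x ⊆ range α := by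
  simp only [Bset, mem_ofPred_eq, ← notMem_periodicPts_iff, isClass_component, true_and]
  refine and_congr_left fun _ => ⟨fun h => h x (mem_component_self α x), fun hx y hy => ?_⟩
  rwa [mem_periodicPts_iff_of_relT hα hy]

theorem component_mem_Aset_union_Bset_iff :
    component α x ∈ Aset α ∪ Bset α ↔ x ∉ periodicPts α := by
  rw [mem_union, component_mem_Aset_iff, component_mem_Bset_iff hα]
  have := component_subset_range_of_mem_periodicPts hα (x := x)
  tauto

theorem component_mem_Cset_iff (hn : 0 < n) :
    component α x ∈ Cset α n ↔ minimalPeriod α x = n := by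
  refine ⟨fun h => (minimalPeriod_eq_iff hn).mpr (h.2.2 x (mem_component_self α x)),
    fun h => ?_⟩
  have hx : x ∈ periodicPts α := minimalPeriod_pos_iff_mem_periodicPts.mp (h ▸ hn)
  have hcomp := component_eq_range_iterate_of_mem_periodicPts hα hx
  refine ⟨isClass_component α x, ?_, ?_⟩
  · rw [hcomp, range_iterate_eq_image_Iio hx, iterate_injOn_Iio_minimalPeriod.ncard_image,
      ncard_Iio_nat, h]
  · rw [hcomp]
    rintro _ ⟨j, rfl⟩
    rw [← minimalPeriod_eq_iff hn, minimalPeriod_apply_iterate hx, h]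

end Kinds

theorem _root_.Cardinal.mk_le_mk_of_injOn {A B : Type u} {f : A → B} {s : Set A} {t : Set B}
    (hf : InjOn f s) (hst : MapsTo f s t) : #s ≤ #t := by
  rw [← Cardinal.mk_image_eq_of_injOn f s hf]
  exact Cardinal.mk_le_mk_of_subset hst.image_subset

section Semiconj

variable {X' : Type*} {α : X → X} {β : X' → X'} {φ : X → X'}

theorem relT.map (h : Semiconj φ α β) {x y : X} (hxy : relT α x y) : relT β (φ x) (φ y) := by
  obtain ⟨k, m, e⟩ := hxy
  exact ⟨k, m, by rw [← (h.iterate_right k).eq, ← (h.iterate_right m).eq, e]⟩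

variable (hφ : Injective φ) (h : Semiconj φ α β)
include hφ h

theorem relT_map_iff {x y : X} : relT β (φ x) (φ y) ↔ relT α x y := by
  refine ⟨fun ⟨k, m, e⟩ => ⟨k, m, hφ ?_⟩, relT.map h⟩
  rwa [(h.iterate_right k).eq, (h.iterate_right m).eq]

theorem minimalPeriod_map (x : X) : minimalPeriod β (φ x) = minimalPeriod α x := by
  refine minimalPeriod_eq_minimalPeriod_iff.mpr fun n => ⟨fun hn => hφ ?_, fun hn => hn.map h⟩
  rw [(h.iterate_right n).eq]
  exact hn

theorem mem_periodicPts_map_iff {x : X} : φ x ∈ periodicPts β ↔ x ∈ periodicPts α := by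
  rw [← minimalPeriod_pos_iff_mem_periodicPts, ← minimalPeriod_pos_iff_mem_periodicPts,
    minimalPeriod_map hφ h]

end Semiconj

section ClassMap

variable {X' : Type*} {α : X → X} {β : X' → X'} {φ : X → X'}

def classMap (β : X' → X') (φ : X → X') (Y : Set X) : Set X' :=
  ⋃ y ∈ Y, component β (φ y)

theorem classMap_component (h : Semiconj φ α β) (x : X) :
    classMap β φ (component α x) = component β (φ x) :=
  subset_antisymm (iUnion₂_subset fun _ hy => (component_eq_of_mem (hy.map h)).subset)
    (subset_biUnion_of_mem (u := fun y => component β (φ y)) (mem_component_self α x))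

theorem component_map_subset_range (hβ : Injective β) (h : Semiconj φ α β) {x : X}
    (hx : component α x ⊆ range α) : component β (φ x) ⊆ range β := by
  rintro z ⟨k, m, e⟩
  obtain ⟨w, rfl⟩ := exists_iterate_eq_of_component_subset_range hx (k + 1)
  refine ⟨β^[m] (φ w), hβ.iterate k ?_⟩
  rw [e, (h.iterate_right (k + 1)).eq, ← iterate_succ_apply' β, ← iterate_add_apply,
    ← iterate_add_apply]
  congr 1
  omega

variable (hα : Injective α) (hβ : Injective β) (hφ : Injective φ) (h : Semiconj φ α β)
include hφ h

theorem injOn_classMap : InjOn (classMap β φ) {Y | IsClass α Y} := by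
  rintro _ ⟨x, rfl⟩ _ ⟨y, rfl⟩ hxy
  change classMap β φ (component α x) = classMap β φ (component α y) at hxy
  rw [classMap_component h, classMap_component h] at hxy
  have hφxy : φ x ∈ component β (φ y) := hxy ▸ mem_component_self β (φ x)
  exact component_eq_of_mem ((relT_map_iff hφ h).mp hφxy)

include hα hβ

theorem mapsTo_classMap_Bset : MapsTo (classMap β φ) (Bset α) (Bset β) := by
  rintro Y hY
  obtain ⟨x, rfl⟩ : ∃ x, Y = component α x := hY.1
  rw [component_mem_Bset_iff hα] at hY
  rw [classMap_component h, component_mem_Bset_iff hβ, mem_periodicPts_map_iff hφ h]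
  exact ⟨hY.1, component_map_subset_range hβ h hY.2⟩

theorem mapsTo_classMap_Aset_union_Bset :
    MapsTo (classMap β φ) (Aset α ∪ Bset α) (Aset β ∪ Bset β) := by
  rintro Y hY
  obtain ⟨x, rfl⟩ : ∃ x, Y = component α x := hY.elim (·.1) (·.1)
  rw [component_mem_Aset_union_Bset_iff hα] at hY
  rwa [classMap_component h, component_mem_Aset_union_Bset_iff hβ, mem_periodicPts_map_iff hφ h]

theorem mapsTo_classMap_Cset {n : ℕ} (hn : 0 < n) :
    MapsTo (classMap β φ) (Cset α n) (Cset β n) := by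
  rintro Y hY
  obtain ⟨x, rfl⟩ : ∃ x, Y = component α x := hY.1
  rw [component_mem_Cset_iff hα hn] at hY
  rwa [classMap_component h, component_mem_Cset_iff hβ hn, minimalPeriod_map hφ h]

end ClassMap

theorem card_le_of_injective_semiconj {X X' : Type u} {α : X → X} {β : X' → X'}
    {φ : X → X'}
    (hα : Injective α) (hβ : Injective β) (hφ : Injective φ) (h : Semiconj φ α β) :
    #(Aset α) + #(Bset α) ≤ #(Aset β) + #(Bset β) ∧ #(Bset α) ≤ #(Bset β) ∧
      ∀ n : ℕ, 1 ≤ n → #(Cset α n) ≤ #(Cset β n) := by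
  have hinj := injOn_classMap hφ h
  refine ⟨?_, ?_, fun n hn => ?_⟩
  · rw [← Cardinal.mk_union_of_disjoint disjoint_Aset_Bset,
      ← Cardinal.mk_union_of_disjoint disjoint_Aset_Bset]
    exact Cardinal.mk_le_mk_of_injOn (hinj.mono fun _ hY => hY.elim (·.1) (·.1))
      (mapsTo_classMap_Aset_union_Bset hα hβ hφ h)
  · exact Cardinal.mk_le_mk_of_injOn (hinj.mono fun _ hY => hY.1)
      (mapsTo_classMap_Bset hα hβ hφ h)
  · exact Cardinal.mk_le_mk_of_injOn (hinj.mono fun _ hY => hY.1)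
      (mapsTo_classMap_Cset hα hβ hφ h hn)

section Embedding

variable {X' : Type*} {α : X → X} {β : X' → X'}

structure IsSemiconjEmbeddingOn (α : X → X) (β : X' → X') (g : X → X') (Y : Set X)
    (Y' : Set X') : Prop where
  injOn : InjOn g Y
  mapsTo : MapsTo g Y Y'
  map_apply : ∀ y ∈ Y, g (α y) = β (g y)

theorem exists_isSemiconjEmbeddingOn_of_param {T : Type*} [Nonempty T] [Add T] [One T]
    {p : T → X} {p' : T → X'} (hp : ∀ t, p (t + 1) = α (p t))
    (hp' : ∀ t, p' (t + 1) = β (p' t)) (hpp' : ∀ t₁ t₂, p t₁ = p t₂ ↔ p' t₁ = p' t₂)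
    {Y' : Set X'} (hY' : range p' ⊆ Y') :
    ∃ g, IsSemiconjEmbeddingOn α β g (range p) Y' := by
  have key : ∀ t, p' (invFun p (p t)) = p' t := fun t => (hpp' _ _).mp (invFun_eq ⟨t, rfl⟩)
  refine ⟨p' ∘ invFun p, ⟨?_, ?_, ?_⟩⟩
  · rintro _ ⟨t₁, rfl⟩ _ ⟨t₂, rfl⟩ e
    simp only [comp_apply, key] at e
    exact (hpp' _ _).mpr e
  · rintro _ ⟨t, rfl⟩
    exact hY' ⟨_, (key t).symm⟩
  · rintro _ ⟨t, rfl⟩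
    simp only [comp_apply, ← hp, key, hp']

theorem exists_isSemiconjEmbeddingOn_of_range_iterate (hα : Injective α) (hβ : Injective β)
    {x : X} {t : X'}
    (hx : component α x = range (α^[·] x)) (ht : minimalPeriod β t = minimalPeriod α x) :
    ∃ g, IsSemiconjEmbeddingOn α β g (component α x) (component β t) := by
  rw [hx]
  refine exists_isSemiconjEmbeddingOn_of_param (fun k => iterate_succ_apply' α k x)
    (fun k => iterate_succ_apply' β k t) (fun a b => ?_) (range_iterate_subset_component β t)
  rw [iterate_eq_iterate_iff_modEq hα, iterate_eq_iterate_iff_modEq hβ, ht]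

theorem exists_int_parametrization (hα : Injective α) {x : X} (hx : x ∉ periodicPts α)
    (hxr : component α x ⊆ range α) :
    ∃ q : ℤ → X, Injective q ∧ range q = component α x ∧
      ∀ z, q (z + 1) = α (q z) := by
  -- `α` permutes the class; the powers of this permutation applied to `x` parametrize it.
  set Y := component α x
  have hmaps : MapsTo α Y Y := (isClass_component α x).mapsTo
  have hsurj : Surjective (hmaps.restrict α Y Y) := by
    rintro ⟨_, hy⟩
    obtain ⟨w, rfl⟩ := hxr hy
    exact ⟨⟨w, relT.trans ⟨1, 0, rfl⟩ hy⟩, rfl⟩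
  let σ : Equiv.Perm Y := Equiv.ofBijective _ ⟨hmaps.restrict_inj.mpr hα.injOn, hsurj⟩
  have hσ : Semiconj Subtype.val σ α := fun _ => rfl
  have hpow (k : ℕ) (w : Y) : ((σ ^ (k : ℤ)) w : X) = α^[k] w := by
    rw [zpow_natCast, Equiv.Perm.coe_pow]
    exact hσ.iterate_right k w
  let p : Y := ⟨x, mem_component_self α x⟩
  have hshift (z₁ z₂ : ℤ) (w : Y) (e : (σ ^ z₁) p = (σ ^ z₂) w) :
      (σ ^ (-z₂ + z₁)) p = w := by
    rw [zpow_add, Equiv.Perm.mul_apply, e, zpow_neg, Equiv.Perm.inv_eq_iff_eq]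
  refine ⟨fun z => ((σ ^ z) p : X), fun z₁ z₂ e => ?_, ?_, fun z => ?_⟩
  · have hdvd := (MulAction.zpow_smul_eq_iff_minimalPeriod_dvd (a := σ) (b := p)).mp
      (hshift z₁ z₂ p (Subtype.val_injective e))
    rw [show (σ • · : Y → Y) = σ from rfl, ← minimalPeriod_map Subtype.val_injective hσ,
      minimalPeriod_eq_zero_of_notMem_periodicPts hx, Nat.cast_zero, zero_dvd_iff] at hdvd
    omega
  · refine subset_antisymm (range_subset_iff.mpr fun z => ((σ ^ z) p).2) fun y hy => ?_
    have ⟨k, m, e⟩ := hy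
    have hkm : (σ ^ (m : ℤ)) p = (σ ^ (k : ℤ)) ⟨y, hy⟩ :=
      Subtype.ext (by rw [hpow, hpow, e])
    exact ⟨-(k : ℤ) + m, congrArg Subtype.val (hshift m k _ hkm)⟩
  · show ((σ ^ (z + 1)) p : X) = α ((σ ^ z) p)
    rw [add_comm, zpow_add, zpow_one, Equiv.Perm.mul_apply]
    rfl

end Embedding

theorem exists_injective_sumElim {A B A' B' : Type u}
    (h : #A + #B ≤ #A' + #B') (hB : #B ≤ #B') :
    ∃ (f : A → A' ⊕ B') (j : B → B'), Injective (Sum.elim f (Sum.inr ∘ j)) := by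
  -- For finite `B`, `R` is the complement of a copy of `B` in `B'` and `#B` cancels; for infinite
  -- `B`, splitting `B' ≃ B' ⊕ B'` leaves a whole copy of `B'` for `A`.
  suffices ∃ (R : Type u) (e : R ⊕ B → B'), Injective e ∧ #A ≤ #A' + #R by
    obtain ⟨R, e, he, hA⟩ := this
    obtain ⟨f⟩ : Nonempty (A ↪ A' ⊕ R) := by
      rwa [← Cardinal.le_def, Cardinal.mk_sum, Cardinal.lift_id, Cardinal.lift_id]
    refine ⟨Sum.map id (e ∘ Sum.inl) ∘ f, e ∘ Sum.inr, ?_⟩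
    refine ((injective_id.sumMap (he.comp Sum.inl_injective)).comp f.injective).sumElim
      (Sum.inr_injective.comp (he.comp Sum.inr_injective)) fun a b hab => ?_
    rcases hfa : f a with a' | r <;> simp [hfa, he.eq_iff] at hab
  obtain ⟨j⟩ := (Cardinal.le_def _ _).mp hB
  rcases lt_or_ge #B Cardinal.aleph0 with hfin | hinf
  · refine ⟨↥(range j)ᶜ, Sum.elim Subtype.val j, Subtype.val_injective.sumElim j.injective
      fun r b hrb => r.2 ⟨b, hrb.symm⟩, ?_⟩
    have hsplit := Cardinal.mk_sum_compl (range j)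
    rw [Cardinal.mk_range_eq j j.injective] at hsplit
    rw [← Cardinal.add_le_add_iff_of_lt_aleph0 hfin]
    calc #A + #B ≤ #A' + #B' := h
      _ = _ := by rw [← hsplit, add_comm #B, add_assoc]
  · obtain ⟨E⟩ : Nonempty (B' ⊕ B' ≃ B') := by
      rw [← Cardinal.eq, Cardinal.mk_sum, Cardinal.lift_id, Cardinal.add_eq_self (hinf.trans hB)]
    exact ⟨B', E ∘ Sum.map id j, E.injective.comp (injective_id.sumMap j.injective),
      (self_le_add_right _ _).trans h⟩

section Glue

variable {X' : Type*} {α : X → X} {β : X' → X'}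

theorem exists_injective_semiconj_of_isSemiconjEmbeddingOn {ι ι' : Type*} {S : ι → Set X}
    {S' : ι' → Set X'} (hcover : ∀ x, ∃ i, x ∈ S i)
    (hS : ∀ {i j x}, x ∈ S i → x ∈ S j → i = j)
    (hS' : ∀ {i j y}, y ∈ S' i → y ∈ S' j → i = j) (hmaps : ∀ i, MapsTo α (S i) (S i))
    {Ψ : ι → ι'} (hΨ : Injective Ψ) {g : ι → X → X'}
    (hg : ∀ i, IsSemiconjEmbeddingOn α β (g i) (S i) (S' (Ψ i))) :
    ∃ φ : X → X', Injective φ ∧ Semiconj φ α β := by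
  choose idx hidx using hcover
  refine ⟨fun x => g (idx x) x, fun x y (e : g (idx x) x = g (idx y) y) => ?_, fun x => ?_⟩
  · have hxy : idx x = idx y :=
      hΨ (hS' ((hg _).mapsTo (hidx x)) (e ▸ (hg _).mapsTo (hidx y)))
    rw [← hxy] at e
    exact (hg (idx x)).injOn (hidx x) (hxy ▸ hidx y) e
  · have hαx : idx (α x) = idx x := hS (hidx (α x)) (hmaps _ (hidx x))
    simp only [hαx]
    exact (hg _).map_apply x (hidx x)

end Glue

section ClassIndex

variable {α : X → X}

-- `Cset α 0` consists of the infinite classes (`ncard` vanishes on infinite sets), hence the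
-- shift to `n + 1`.
abbrev ClassIndex (α : X → X) : Type _ := (Aset α ⊕ Bset α) ⊕ Σ n : ℕ, Cset α (n + 1)

def classSet : ClassIndex α → Set X
  | .inl (.inl Y) => Y
  | .inl (.inr Y) => Y
  | .inr ⟨_, Y⟩ => Y

theorem isClass_classSet : ∀ i : ClassIndex α, IsClass α (classSet i)
  | .inl (.inl Y) => Y.2.1
  | .inl (.inr Y) => Y.2.1
  | .inr ⟨_, Y⟩ => Y.2.1

theorem classSet_injective : Injective (classSet (α := α)) := by
  rintro ((Y | Y) | ⟨n, Y⟩) ((Y' | Y') | ⟨n', Y'⟩) h <;> simp only [classSet] at h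
  · rw [Subtype.ext h]
  · exact absurd (h ▸ Y'.2) (Set.disjoint_left.mp disjoint_Aset_Bset Y.2)
  · exact absurd (h ▸ Y'.2) (notMem_Cset_of_mem_Aset Y.2)
  · exact absurd (h ▸ Y.2) (Set.disjoint_left.mp disjoint_Aset_Bset Y'.2)
  · rw [Subtype.ext h]
  · exact absurd (h ▸ Y'.2) (notMem_Cset_of_mem_Bset Y.2)
  · exact absurd (h ▸ Y.2) (notMem_Cset_of_mem_Aset Y'.2)
  · exact absurd (h ▸ Y.2) (notMem_Cset_of_mem_Bset Y'.2)
  · obtain rfl : n = n' := by simpa [← h, Y.2.2.1] using Y'.2.2.1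
    rw [Subtype.ext h]

theorem eq_of_mem_classSet {i j : ClassIndex α} {x : X} (hi : x ∈ classSet i)
    (hj : x ∈ classSet j) : i = j :=
  classSet_injective
    (((isClass_classSet i).eq_component hi).trans ((isClass_classSet j).eq_component hj).symm)

theorem exists_mem_classSet (hα : Injective α) (x : X) :
    ∃ i : ClassIndex α, x ∈ classSet i := by
  by_cases hx : x ∈ periodicPts α
  · have hn := minimalPeriod_pos_of_mem_periodicPts hx
    have hC : component α x ∈ Cset α (minimalPeriod α x - 1 + 1) :=
      (component_mem_Cset_iff hα (Nat.succ_pos _)).mpr (by omega)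
    exact ⟨.inr ⟨_, _, hC⟩, mem_component_self α x⟩
  · obtain hA | hB := (component_mem_Aset_union_Bset_iff hα).mpr hx
    exacts [⟨.inl (.inl ⟨_, hA⟩), mem_component_self α x⟩,
      ⟨.inl (.inr ⟨_, hB⟩), mem_component_self α x⟩]

end ClassIndex

section Backward

variable {X' : Type*} {α : X → X} {β : X' → X'} (hα : Injective α) (hβ : Injective β)
include hα hβ

theorem exists_isSemiconjEmbeddingOn_of_mem_Aset {Y : Set X} {Y' : Set X'} (hY : Y ∈ Aset α)
    (hY' : Y' ∈ Aset β ∪ Bset β) : ∃ g, IsSemiconjEmbeddingOn α β g Y Y' := by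
  obtain ⟨hYc, s, hs, hsr⟩ := hY
  obtain ⟨t, rfl⟩ : ∃ t, Y' = component β t := hY'.elim (·.1) (·.1)
  rw [hYc.eq_component hs]
  refine exists_isSemiconjEmbeddingOn_of_range_iterate hα hβ
    (component_eq_range_iterate_of_notMem_range hα hsr) ?_
  rw [minimalPeriod_eq_zero_of_notMem_periodicPts
      ((component_mem_Aset_union_Bset_iff hβ).mp hY'),
    minimalPeriod_eq_zero_of_notMem_periodicPts (notMem_periodicPts_of_notMem_range hsr)]

theorem exists_isSemiconjEmbeddingOn_of_mem_Bset {Y : Set X} {Y' : Set X'} (hY : Y ∈ Bset α)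
    (hY' : Y' ∈ Bset β) : ∃ g, IsSemiconjEmbeddingOn α β g Y Y' := by
  obtain ⟨x, rfl⟩ : ∃ x, Y = component α x := hY.1
  obtain ⟨t, rfl⟩ : ∃ t, Y' = component β t := hY'.1
  obtain ⟨hx, hxr⟩ := (component_mem_Bset_iff hα).mp hY
  obtain ⟨ht, htr⟩ := (component_mem_Bset_iff hβ).mp hY'
  obtain ⟨q, hq, hqr, hqα⟩ := exists_int_parametrization hα hx hxr
  obtain ⟨q', hq', hqr', hqβ⟩ := exists_int_parametrization hβ ht htr
  rw [← hqr]
  exact exists_isSemiconjEmbeddingOn_of_param hqα hqβ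
    (fun _ _ => hq.eq_iff.trans hq'.eq_iff.symm) hqr'.subset

theorem exists_isSemiconjEmbeddingOn_of_mem_Cset {n : ℕ} (hn : 0 < n) {Y : Set X} {Y' : Set X'}
    (hY : Y ∈ Cset α n) (hY' : Y' ∈ Cset β n) :
    ∃ g, IsSemiconjEmbeddingOn α β g Y Y' := by
  obtain ⟨x, rfl⟩ : ∃ x, Y = component α x := hY.1
  obtain ⟨t, rfl⟩ : ∃ t, Y' = component β t := hY'.1
  rw [component_mem_Cset_iff hα hn] at hY
  rw [component_mem_Cset_iff hβ hn] at hY'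
  have hx : x ∈ periodicPts α := minimalPeriod_pos_iff_mem_periodicPts.mp (hY ▸ hn)
  exact exists_isSemiconjEmbeddingOn_of_range_iterate hα hβ
    (component_eq_range_iterate_of_mem_periodicPts hα hx) (hY'.trans hY.symm)

theorem exists_isSemiconjEmbeddingOn_classSet (f : Aset α → Aset β ⊕ Bset β)
    (j : Bset α → Bset β) (fC : ∀ n, Cset α (n + 1) → Cset β (n + 1))
    (i : ClassIndex α) :
    ∃ g, IsSemiconjEmbeddingOn α β g (classSet i)
      (classSet (Sum.map (Sum.elim f (Sum.inr ∘ j)) (Sigma.map id fC) i)) := by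
  rcases i with (Y | Y) | ⟨n, Y⟩
  · refine exists_isSemiconjEmbeddingOn_of_mem_Aset hα hβ Y.2 ?_
    change classSet (.inl (f Y)) ∈ _
    rcases f Y with Y' | Y'
    exacts [.inl Y'.2, .inr Y'.2]
  · exact exists_isSemiconjEmbeddingOn_of_mem_Bset hα hβ Y.2 (j Y).2
  · exact exists_isSemiconjEmbeddingOn_of_mem_Cset hα hβ n.succ_pos Y.2 (fC n Y).2

end Backward

theorem exists_injective_semiconj_of_card_le {X X' : Type u} {α : X → X} {β : X' → X'}
    (hα : Injective α) (hβ : Injective β)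
    (hAB : #(Aset α) + #(Bset α) ≤ #(Aset β) + #(Bset β))
    (hB : #(Bset α) ≤ #(Bset β))
    (hC : ∀ n : ℕ, 1 ≤ n → #(Cset α n) ≤ #(Cset β n)) :
    ∃ φ : X → X', Injective φ ∧ Semiconj φ α β := by
  obtain ⟨f, j, hfj⟩ := exists_injective_sumElim hAB hB
  have fC n : Cset α (n + 1) ↪ Cset β (n + 1) :=
    Classical.choice ((Cardinal.le_def _ _).mp (hC (n + 1) n.succ_pos))
  choose g hg using exists_isSemiconjEmbeddingOn_classSet hα hβ f j fun n => fC n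
  exact exists_injective_semiconj_of_isSemiconjEmbeddingOn (exists_mem_classSet hα)
    eq_of_mem_classSet eq_of_mem_classSet (fun i => (isClass_classSet i).mapsTo)
    (hfj.sumMap (injective_id.sigma_map fun n => (fC n).injective)) hg

theorem exists_injective_semiconj_iff {X X' : Type u} {α : X → X} {β : X' → X'}
    (hα : Injective α) (hβ : Injective β) :
    (∃ φ : X → X', Injective φ ∧ Semiconj φ α β) ↔
      #(Aset α) + #(Bset α) ≤ #(Aset β) + #(Bset β) ∧
      #(Bset α) ≤ #(Bset β) ∧
      ∀ n : ℕ, 1 ≤ n → #(Cset α n) ≤ #(Cset β n) :=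
  ⟨fun ⟨_, hφ, h⟩ => card_le_of_injective_semiconj hα hβ hφ h,
    fun ⟨hAB, hB, hC⟩ => exists_injective_semiconj_of_card_le hα hβ hAB hB hC⟩

theorem conjInj_iff_exists_injective_semiconj (α β : X → X) :
    ConjInj α β ↔ (∃ φ : X → X, Injective φ ∧ Semiconj φ α β) ∧
      ∃ ψ : X → X, Injective ψ ∧ Semiconj ψ β α := by
  simp only [ConjInj, semiconj_iff_comp_eq]
  exact ⟨fun ⟨φ, ψ, hφ, hψ, h, h'⟩ => ⟨⟨φ, hφ, h⟩, ⟨ψ, hψ, h'⟩⟩,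
    fun ⟨⟨φ, hφ, h⟩, ⟨ψ, hψ, h'⟩⟩ => ⟨φ, ψ, hφ, hψ, h, h'⟩⟩

theorem conjInj_iff_general (X : Type*) (α β : X → X)
    (hα : Function.Injective α) (hβ : Function.Injective β) :
    ConjInj α β ↔
      (Cardinal.mk (Aset α) + Cardinal.mk (Bset α) =
        Cardinal.mk (Aset β) + Cardinal.mk (Bset β)) ∧
      Cardinal.mk (Bset α) = Cardinal.mk (Bset β) ∧
      ∀ n : ℕ, 1 ≤ n → Cardinal.mk (Cset α n) = Cardinal.mk (Cset β n) := by
  rw [conjInj_iff_exists_injective_semiconj, exists_injective_semiconj_iff hα hβ,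
    exists_injective_semiconj_iff hβ hα]
  constructor
  · rintro ⟨⟨hAB, hB, hC⟩, hAB', hB', hC'⟩
    exact ⟨hAB.antisymm hAB', hB.antisymm hB', fun n hn => (hC n hn).antisymm (hC' n hn)⟩
  · rintro ⟨hAB, hB, hC⟩
    exact ⟨⟨hAB.le, hB.le, fun n hn => (hC n hn).le⟩,
      hAB.ge, hB.ge, fun n hn => (hC n hn).ge⟩

/-- Theorem 7.6. For injective full transformations `α, β` of a
nonempty set `X`: `α ~c β` in `Γ(X)` iff `|A_α| + |B_α| = |A_β| + |B_β|`,
`|B_α| = |B_β|`, and `|C_α^n| = |C_β^n|` for all `n ≥ 1`. -/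
theorem conjInj_iff (X : Type*) [Nonempty X] (α β : X → X)
    (hα : Function.Injective α) (hβ : Function.Injective β) :
    ConjInj α β ↔
      (Cardinal.mk (Aset α) + Cardinal.mk (Bset α) =
        Cardinal.mk (Aset β) + Cardinal.mk (Bset β)) ∧
      Cardinal.mk (Bset α) = Cardinal.mk (Bset β) ∧
      ∀ n : ℕ, 1 ≤ n → Cardinal.mk (Cset α n) = Cardinal.mk (Cset β n) :=
  conjInj_iff_general X α β hα hβ

end ConjPaper
end
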